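/- Fix non-negative integers m, n and a partition λ with l(λ) ≤ m+n. The map sending each m-element subset V = {V_1 < ⋯ < V_m} of {1, …, m+n}, with complement H = {H_1 < ⋯ < H_n}, to the pair of partitions (μ, ν) defined by μ_i = λ_{V_i} + n + i − V_i (1 ≤ i ≤ m) and ν_j = λ_{H_j} + m + j − H_j (1 ≤ j ≤ n), is a bijection onto the set of all pairs of partitions (μ, ν) with l(μ) ≤ m, l(ν) ≤ n and μ ⋆_{m,n} ν = λ. Moreover, for the pair (μ, ν) corresponding to V, the sign satisfies ε_{m,n}(μ, ν) = (−1)^{Σ_{j=1}^{n}(m + j − H_j)} = (−1)^{mn − Σ_{i=1}^{m}(n + i − V_i)}. -/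

import Mathlib

open scoped Classical

/-- `f : ℕ → ℕ` represents a partition via its parts `f 1 ≥ f 2 ≥ ⋯`
(indices start at `1`; we normalize the unused value at `0` by `f 0 = f 1`). -/
def IsPartition (f : ℕ → ℕ) : Prop :=
  f 0 = f 1 ∧ (∀ i j, i ≤ j → f j ≤ f i) ∧ ∃ N, ∀ i, N ≤ i → f i = 0

/-- the partition `f` has length (number of positive parts) at most `r`,
i.e. `l(f) ≤ r`. -/
def LenLE (f : ℕ → ℕ) (r : ℕ) : Prop := ∀ i, r < i → f i = 0

/-- two partitions have the same parts. -/
def EqParts (f g : ℕ → ℕ) : Prop := ∀ i, 1 ≤ i → f i = g i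

/-- normalize the value at the (unused) index `0`. -/
def pad (f : ℕ → ℕ) : ℕ → ℕ := fun i => if i = 0 then f 1 else f i

/-- the multiset `{f i + N - i : i = 1, …, N}`. -/
def hooks (N : ℕ) (f : ℕ → ℕ) : Multiset ℕ :=
  (Multiset.range N).map (fun i => f (i + 1) + N - (i + 1))

/-- `lam` is the `(m,n)`-overlap of `mu` and `nu`, i.e. `mu ⋆_{m,n} nu = lam`:
`lam` is a partition of length at most `m + n` such that the sequence
`(lam i + (m+n) - i)_{i=1..m+n}` is a rearrangement of the concatenation of
`(mu i + m - i)_{i=1..m}` and `(nu j + n - j)_{j=1..n}`. -/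
def IsOverlap (m n : ℕ) (mu nu lam : ℕ → ℕ) : Prop :=
  LenLE lam (m + n) ∧ hooks (m + n) lam = hooks m mu + hooks n nu

/-- `mu ⋆_{m,n} nu = ∞`: the two hook sequences share a common value. -/
def OverlapInfinite (m n : ℕ) (mu nu : ℕ → ℕ) : Prop :=
  ∃ a, a ∈ hooks m mu ∧ a ∈ hooks n nu

/-- the sign `ε_{m,n}(mu, nu)` of the permutation sorting the concatenation of
`(mu i + m - i)_{i=1..m}` and `(nu j + n - j)_{j=1..n}` into strictly decreasing
order, computed as `(-1)` to the number of inversions. -/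
def overlapSign (m n : ℕ) (mu nu : ℕ → ℕ) : ℤ :=
  (-1) ^ (((Finset.range m ×ˢ Finset.range n).filter (fun p =>
    mu (p.1 + 1) + m - (p.1 + 1) < nu (p.2 + 1) + n - (p.2 + 1))).card)

/-- the truncation `(f_1, …, f_r)` of a partition. -/
def truncateP (f : ℕ → ℕ) (r : ℕ) : ℕ → ℕ := pad fun i => if i ≤ r then f i else 0

/-- `μ + ⟨k^l⟩ = (μ_1 + k, …, μ_l + k)`. -/
def addRect (mu : ℕ → ℕ) (k l : ℕ) : ℕ → ℕ := pad fun i => if i ≤ l then mu i + k else 0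

/-- `μ − ⟨k^l⟩ = (μ_1 − k, …, μ_l − k)`. -/
def subRect (mu : ℕ → ℕ) (k l : ℕ) : ℕ → ℕ := pad fun i => if i ≤ l then mu i - k else 0

/-- `ν ∪ a`: `ν` regarded as a sequence of length `r`, with the sequence `a`
appended after position `r`. -/
def concatSeq (nu : ℕ → ℕ) (r : ℕ) (tail : ℕ → ℕ) : ℕ → ℕ :=
  pad fun i => if i ≤ r then nu i else tail (i - r)

/-- the rectangular partition `⟨a^b⟩` (with `b` parts equal to `a`). -/
def rectP (a b : ℕ) : ℕ → ℕ := pad fun i => if i ≤ b then a else 0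

/-- the `(m,n)`-complement `λ̃ = (m − λ_n, …, m − λ_1)` of a partition `λ ⊂ ⟨m^n⟩`. -/
def complSeq (m n : ℕ) (lam : ℕ → ℕ) : ℕ → ℕ :=
  pad fun i => if i ≤ n then m - lam (n + 1 - i) else 0

noncomputable section

/-- the `i`-th part `λ'_i = #{j ≥ 1 : λ_j ≥ i}` of the conjugate partition. -/
def conjPart (f : ℕ → ℕ) (i : ℕ) : ℕ := {j : ℕ | 1 ≤ j ∧ i ≤ f j}.ncard

/-- the conjugate partition `λ'`. -/
def conjP (f : ℕ → ℕ) : ℕ → ℕ := pad fun i => conjPart f i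

/-- the set of integers `k ≤ min{m,n}` with `λ_{n+1−k} ≤ m − k`. -/
def indexSet (m n : ℕ) (lam : ℕ → ℕ) : Set ℤ :=
  {k : ℤ | k ≤ min (m : ℤ) (n : ℤ) ∧ (lam ((n : ℤ) + 1 - k).toNat : ℤ) ≤ (m : ℤ) - k}

/-- `k` is the `(m,n)`-index of `lam`: the largest integer `k ≤ min{m,n}`
with `λ_{n+1−k} ≤ m − k`. -/
def IsIndex (m n : ℕ) (lam : ℕ → ℕ) (k : ℤ) : Prop := IsGreatest (indexSet m n lam) k

/-- the `(m,n)`-index of `lam`. -/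
def indexOf (m n : ℕ) (lam : ℕ → ℕ) : ℤ := sSup (indexSet m n lam)

variable {F : Type*} [Field F]

/-- `Δ(X) = ∏_{i<j} (X_i − X_j)`. -/
def vanDet {n : ℕ} (X : Fin n → F) : F :=
  ∏ i : Fin n, ∏ j : Fin n, if i < j then X i - X j else 1

/-- `Δ(X; Y) = ∏_{x ∈ X, y ∈ Y} (x − y)`. -/
def vanPair {n m : ℕ} (X : Fin n → F) (Y : Fin m → F) : F :=
  ∏ i, ∏ j, (X i - Y j)

/-- the Schur function `s_λ(X)`. -/
def schur {n : ℕ} (lam : ℕ → ℕ) (X : Fin n → F) : F :=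
  if LenLE lam n then
    (Matrix.of fun i j : Fin n =>
      X i ^ (lam ((j : ℕ) + 1) + n - ((j : ℕ) + 1))).det / vanDet X
  else 0

/-- the subsequence of `X` indexed by `I` (in increasing order of indices). -/
def subSeq {n : ℕ} (X : Fin n → F) (I : Finset (Fin n)) : Fin I.card → F :=
  fun j => X (I.orderIsoOfFin rfl j).1

/-- the sign `ε(λ) = (−1)^{λ_1+⋯+λ_{n−k}} (−1)^{mk} (−1)^{k(k−1)/2}` from the
determinantal formula. -/
def LSsign (m n k : ℕ) (lam : ℕ → ℕ) : ℤ :=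
  (-1) ^ (∑ i ∈ Finset.range (n - k), lam (i + 1)) * (-1) ^ (m * k) *
    (-1) ^ (k * (k - 1) / 2)

/-- the Moens–Van der Jeugt block matrix. -/
def LSmat (k : ℕ) {n m : ℕ} (lam : ℕ → ℕ) (X : Fin n → F) (Y : Fin m → F) :
    Matrix (Fin (n + (m - k))) (Fin (n + (m - k))) F :=
  Matrix.of fun r c =>
    if hr : (r : ℕ) < n then
      if hc : (c : ℕ) < m then (X ⟨(r : ℕ), hr⟩ - Y ⟨(c : ℕ), hc⟩)⁻¹
      else X ⟨(r : ℕ), hr⟩ ^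
        ((lam ((c : ℕ) - m + 1) : ℤ) + (n : ℤ) - (m : ℤ) - (((c : ℕ) - m + 1 : ℕ) : ℤ))
    else
      if hc : (c : ℕ) < m then
        Y ⟨(c : ℕ), hc⟩ ^
          ((conjPart lam ((r : ℕ) - n + 1) : ℤ) + (m : ℤ) - (n : ℤ) - (((r : ℕ) - n + 1 : ℕ) : ℤ))
      else 0

/-- the Littlewood–Schur function `LS_λ(−X; Y)`, defined by the determinantal
formula of Moens and Van der Jeugt: it is `0` if the `(m,n)`-index `k` of `λ` is
negative, and otherwise equals `ε(λ) · Δ(Y;X)/(Δ(X)Δ(Y)) · det M`. -/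
def LS {n m : ℕ} (lam : ℕ → ℕ) (X : Fin n → F) (Y : Fin m → F) : F :=
  if indexOf m n lam < 0 then 0
  else (LSsign m n (indexOf m n lam).toNat lam : F) * vanPair Y X /
    (vanDet X * vanDet Y) * (LSmat (indexOf m n lam).toNat lam X Y).det

/-- `walkMu lam n I` is the partition with `i`-th part `λ_{V_i} + n + i − V_i`,
where `V_1 < ⋯ < V_card(I)` is the increasing (1-based) enumeration of `I`. -/
def walkMu (lam : ℕ → ℕ) (n : ℕ) {N : ℕ} (I : Finset (Fin N)) : ℕ → ℕ :=
  pad fun i =>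
    if h : 1 ≤ i ∧ i ≤ I.card then
      lam (((I.orderIsoOfFin rfl ⟨i - 1, by omega⟩).1 : ℕ) + 1) +
        (n + i - (((I.orderIsoOfFin rfl ⟨i - 1, by omega⟩).1 : ℕ) + 1))
    else 0

/-- `C_N(K)`: the set `{N − j + 1 : j ∈ {1,…,N} ∖ K}`. -/
def Cfin (N : ℕ) (K : Finset ℕ) : Finset ℕ :=
  (Finset.Icc 1 N \ K).image (fun j => N + 1 - j)

/-- the subpartition `sub_N(λ, s)`: its `j`-th part is
`λ_{s_j} + (N − s_j) − (r − j)`, where `s_1 < ⋯ < s_r` are the elements of `s`. -/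
def subPartF (N : ℕ) (lam : ℕ → ℕ) (s : Finset ℕ) : ℕ → ℕ :=
  pad fun j =>
    if h : 1 ≤ j ∧ j ≤ s.card then
      lam ((s.orderIsoOfFin rfl ⟨j - 1, by omega⟩).1) +
        (N - (s.orderIsoOfFin rfl ⟨j - 1, by omega⟩).1) - (s.card - j)
    else 0

end

/-- `α` is a quasi-partition associated to the subset with membership
predicate `inV` (the complement being taken inside `{1, …, m+n}`). -/
def IsQuasiPartition (m n : ℕ) (inV : ℕ → Prop) (α : ℕ → ℤ) : Prop :=
  0 ≤ α (m + n) ∧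
  (∀ i, 1 < i → i < m + n → ¬(α (i - 1) < α i ∧ α i < α (i + 1))) ∧
  (∀ i, 1 ≤ i → i < m + n → ((inV i ↔ inV (i + 1)) → α (i + 1) ≤ α i)) ∧
  (∀ i, 1 ≤ i → i < m + n → (¬(inV i ↔ inV (i + 1)) → α (i + 1) ≤ α i + 1))

/-- the integer sequence `α_1, …, α_N` is a partition: non-increasing and
non-negative. -/
def IsPartitionSeqZ (N : ℕ) (α : ℕ → ℤ) : Prop :=
  (∀ i j, 1 ≤ i → i ≤ j → j ≤ N → α j ≤ α i) ∧ ∀ i, 1 ≤ i → i ≤ N → 0 ≤ α i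

/-! The hooks of `λ` are `β v = λ_v + (m+n) - v`, strictly decreasing in `v` because `λ` is a
partition. By construction the hook sequence of `μ` is `β` on `V` and that of `ν` is `β` on `H`,
so `μ ⋆ ν = λ` just splits the hooks of `λ` into two parts, and `V` is recovered as the set of
positions whose hook is a hook of `μ`. A pair `(V_i, H_j)` is an inversion of the concatenated
hook sequence exactly when `H_j < V_i`, and there are `m + j - H_j` such `i` for each `j`. -/

open Finset

lemma IsPartition.antitone {f : ℕ → ℕ} (hf : IsPartition f) : Antitone f :=
  fun i j h => hf.2.1 i j h

def hookAt (N : ℕ) (f : ℕ → ℕ) (v : Fin N) : ℕ := f (v + 1) + N - (v + 1)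

section Hooks

variable {f g : ℕ → ℕ} {N : ℕ}

lemma hookAt_strictAnti (hf : Antitone f) : StrictAnti (hookAt N f) := by
  intro v w hvw
  have hw := w.isLt
  have : f (w + 1) ≤ f (v + 1) := hf (by omega)
  simp only [hookAt]
  omega

lemma hooks_eq_map_hookAt : hooks N f = (univ : Finset (Fin N)).val.map (hookAt N f) := by
  rw [hooks, ← Multiset.coe_range, ← List.map_coe_finRange_eq_range, Multiset.map_coe,
    List.map_map]
  rfl

lemma hooks_eq_map_add_map_compl (s : Finset (Fin N)) :
    hooks N f = s.val.map (hookAt N f) + sᶜ.val.map (hookAt N f) := by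
  rw [hooks_eq_map_hookAt, ← Multiset.map_add, ← union_compl s,
    ← disjUnion_eq_union s sᶜ disjoint_compl_right]
  rfl

lemma card_hooks (f : ℕ → ℕ) (c : ℕ) : Multiset.card (hooks c f) = c := by
  simp [hooks]

lemma hooks_congr {c : ℕ} (h : EqParts f g) : hooks c f = hooks c g :=
  Multiset.map_congr rfl fun x _ => by rw [h (x + 1) (by omega)]

lemma pairwise_gt_hooks_list (hf : Antitone f) (c : ℕ) :
    ((List.range c).map fun i => f (i + 1) + c - (i + 1)).Pairwise (· > ·) := by
  rw [List.pairwise_map, List.pairwise_iff_getElem]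
  intro i j hi hj hij
  simp only [List.length_range] at hi hj
  simp only [List.getElem_range]
  have : f (j + 1) ≤ f (i + 1) := hf (by omega)
  omega

/-- Sorting recovers the parts: the hook list of a partition is strictly decreasing. -/
lemma eqParts_of_hooks_eq {c : ℕ} (hf : Antitone f) (hg : Antitone g) (hfc : LenLE f c)
    (hgc : LenLE g c) (h : hooks c f = hooks c g) : EqParts f g := by
  intro i hi
  rcases le_or_gt i c with hic | hci
  · rw [hooks, hooks, ← Multiset.coe_range, Multiset.map_coe, Multiset.map_coe,
      Multiset.coe_eq_coe] at h
    have hlist := h.eq_of_pairwise' (pairwise_gt_hooks_list hf c) (pairwise_gt_hooks_list hg c)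
    have := List.map_inj_left.1 hlist (i - 1) (List.mem_range.2 (by omega))
    simp only [Nat.sub_add_cancel hi] at this
    omega
  · rw [hfc i hci, hgc i hci]

end Hooks

section Enumeration

lemma card_filter_orderEmbOfFin {α : Type*} [LinearOrder α] (s : Finset α) (p : α → Prop)
    [DecidablePred p] : #{i : Fin #s | p (s.orderEmbOfFin rfl i)} = #{v ∈ s | p v} := by
  conv_rhs => rw [← s.map_orderEmbOfFin_univ rfl]
  rw [filter_map, card_map]
  rfl

lemma card_filter_lt_orderEmbOfFin {α : Type*} [LinearOrder α] (s : Finset α) (k : Fin #s) :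
    #{v ∈ s | v < s.orderEmbOfFin rfl k} = k := by
  rw [← card_filter_orderEmbOfFin]
  simp only [OrderEmbedding.lt_iff_lt]
  rw [filter_gt_eq_Iio, Fin.card_Iio]

variable {N : ℕ} {s t : Finset (Fin N)}

lemma val_orderEmbOfFin_eq (hst : IsCompl s t) (k : Fin #s) :
    (s.orderEmbOfFin rfl k : ℕ) = k + #{w ∈ t | w < s.orderEmbOfFin rfl k} := by
  set v := s.orderEmbOfFin rfl k
  have hsplit : #{w ∈ s | w < v} + #{w ∈ t | w < v} = #{w : Fin N | w < v} := by
    rw [← card_union_of_disjoint (disjoint_filter_filter hst.disjoint), ← filter_union,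
      ← sup_eq_union, hst.sup_eq_top, top_eq_univ]
  rw [card_filter_lt_orderEmbOfFin, filter_gt_eq_Iio, Fin.card_Iio] at hsplit
  omega

lemma val_orderEmbOfFin_le (hst : IsCompl s t) (k : Fin #s) :
    (s.orderEmbOfFin rfl k : ℕ) ≤ k + #t := by
  rw [val_orderEmbOfFin_eq hst]
  exact Nat.add_le_add_left (card_filter_le _ _) _

/-- Counting the elements of `s` below `t_j` in two ways: there are `t_j - j` of them. -/
lemma card_filter_lt_orderEmbOfFin_add (hst : IsCompl s t) (j : Fin #t) :
    #{i : Fin #s | t.orderEmbOfFin rfl j < s.orderEmbOfFin rfl i} +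
      t.orderEmbOfFin rfl j = #s + j := by
  have hh := disjoint_right.1 hst.disjoint (t.orderEmbOfFin_mem rfl j)
  have hval := val_orderEmbOfFin_eq hst.symm j
  rw [card_filter_orderEmbOfFin]
  generalize t.orderEmbOfFin rfl j = h at *
  have hcount : #{v ∈ s | v < h} + #{v ∈ s | h < v} = #s := by
    have hgt : {v ∈ s | h < v} = {v ∈ s | ¬v < h} := filter_congr fun v hv =>
      ⟨not_lt_of_gt, fun hle => lt_of_le_of_ne (not_lt.1 hle) fun e => hh (e ▸ hv)⟩
    rw [hgt, card_filter_add_card_filter_not]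
  omega

end Enumeration

section WalkMu

variable {N : ℕ} (lam : ℕ → ℕ) (a : ℕ) (s : Finset (Fin N))

lemma walkMu_succ (k : Fin #s) :
    walkMu lam a s (k + 1) =
      lam (s.orderEmbOfFin rfl k + 1) + (a + (k + 1) - (s.orderEmbOfFin rfl k + 1)) := by
  simp [walkMu, pad]

lemma walkMu_eq_zero {i : ℕ} (h : #s < i) : walkMu lam a s i = 0 := by
  simp only [walkMu, pad]
  rw [if_neg (by omega), dif_neg (by omega)]

variable {lam}

lemma walkMu_antitone (hlam : Antitone lam) : Antitone (walkMu lam a s) := by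
  refine antitone_nat_of_succ_le fun i => ?_
  rcases lt_or_ge i #s with hi | hi
  · rcases i with _ | k
    · rfl
    · have hk : k + 1 < #s := by omega
      have hlt : (s.orderEmbOfFin rfl ⟨k, by omega⟩ : ℕ) < s.orderEmbOfFin rfl ⟨k + 1, hk⟩ :=
        (s.orderEmbOfFin rfl).strictMono (Fin.mk_lt_mk.2 k.lt_succ_self)
      have hlam' : lam (s.orderEmbOfFin rfl ⟨k + 1, hk⟩ + 1) ≤
          lam (s.orderEmbOfFin rfl ⟨k, by omega⟩ + 1) := hlam (by omega)
      rw [walkMu_succ lam a s ⟨k, by omega⟩, walkMu_succ lam a s ⟨k + 1, hk⟩]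
      dsimp only
      omega
  · rw [walkMu_eq_zero lam a s (by omega)]
    exact Nat.zero_le _

lemma isPartition_walkMu (hlam : Antitone lam) : IsPartition (walkMu lam a s) :=
  ⟨rfl, fun _ _ h => walkMu_antitone a s hlam h, #s + 1, fun _ hi => walkMu_eq_zero lam a s hi⟩

lemma lenLE_walkMu {c : ℕ} (hc : #s = c) : LenLE (walkMu lam a s) c :=
  fun _ hi => walkMu_eq_zero lam a s (hc ▸ hi)

variable {a}

lemma hook_walkMu (ha : #s + a = N) (k : Fin #s) :
    walkMu lam a s (k + 1) + #s - (k + 1) = hookAt N lam (s.orderEmbOfFin rfl k) := by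
  have hle := val_orderEmbOfFin_le isCompl_compl k
  have hcompl : #sᶜ = a := by rw [card_compl, Fintype.card_fin]; omega
  rw [walkMu_succ, hookAt]
  omega

lemma hooks_walkMu {c : ℕ} (hc : #s = c) (ha : c + a = N) :
    hooks c (walkMu lam a s) = s.val.map (hookAt N lam) := by
  subst hc
  conv_rhs => rw [← s.map_orderEmbOfFin_univ rfl, map_val, Multiset.map_map]
  rw [hooks_eq_map_hookAt]
  exact Multiset.map_congr rfl fun k _ => hook_walkMu s ha k

end WalkMu

section Sign

lemma card_filter_range_product (a b : ℕ) (p : ℕ × ℕ → Prop) [DecidablePred p] :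
    #{x ∈ range a ×ˢ range b | p x} = ∑ j : Fin b, #{i : Fin a | p (i, j)} := by
  simp only [card_filter, sum_product_right]
  rw [← Fin.sum_univ_eq_sum_range]
  exact sum_congr rfl fun j _ =>
    (Fin.sum_univ_eq_sum_range (fun i => if p (i, j) then 1 else 0) a).symm

variable {N : ℕ} {s t : Finset (Fin N)}

/-- Both exponents of the sign formula count pairs `(i, j)`, according as `t_j < s_i` or
`s_i < t_j`. -/
lemma sum_add_sum_eq_mul (hst : IsCompl s t) {a b : ℕ} (ha : #s = a) (hb : #t = b) :
    ∑ j : Fin #t, (a + (j + 1) - (t.orderEmbOfFin rfl j + 1)) +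
      ∑ i : Fin #s, (b + (i + 1) - (s.orderEmbOfFin rfl i + 1)) = a * b := by
  subst ha hb
  have hA : ∀ j : Fin #t, #s + (j + 1) - (t.orderEmbOfFin rfl j + 1) =
      #{i : Fin #s | t.orderEmbOfFin rfl j < s.orderEmbOfFin rfl i} := fun j => by
    have := card_filter_lt_orderEmbOfFin_add hst j
    omega
  have hB : ∀ i : Fin #s, #t + (i + 1) - (s.orderEmbOfFin rfl i + 1) =
      #{j : Fin #t | s.orderEmbOfFin rfl i < t.orderEmbOfFin rfl j} := fun i => by
    have := card_filter_lt_orderEmbOfFin_add hst.symm i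
    omega
  simp only [hA, hB]
  have hswap := sum_card_bipartiteAbove_eq_sum_card_bipartiteBelow (s := univ) (t := univ)
    (r := fun i j => s.orderEmbOfFin rfl i < t.orderEmbOfFin rfl j)
  simp only [bipartiteAbove, bipartiteBelow] at hswap
  rw [hswap, ← sum_add_distrib]
  have hsplit : ∀ j : Fin #t, #{i : Fin #s | t.orderEmbOfFin rfl j < s.orderEmbOfFin rfl i} +
      #{i : Fin #s | s.orderEmbOfFin rfl i < t.orderEmbOfFin rfl j} =
      #s := fun j => by
    have hne : ∀ i, s.orderEmbOfFin rfl i ≠ t.orderEmbOfFin rfl j := fun i e =>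
      disjoint_left.1 hst.disjoint (s.orderEmbOfFin_mem rfl i) (e ▸ t.orderEmbOfFin_mem rfl j)
    have hlt : univ.filter (fun i : Fin #s => s.orderEmbOfFin rfl i < t.orderEmbOfFin rfl j) =
        univ.filter (fun i => ¬t.orderEmbOfFin rfl j < s.orderEmbOfFin rfl i) :=
      filter_congr fun i _ => by rw [not_lt, lt_iff_le_and_ne]; exact and_iff_left (hne i)
    rw [hlt, card_filter_add_card_filter_not, card_univ, Fintype.card_fin]
  rw [sum_congr rfl fun j _ => hsplit j, sum_const, card_univ, Fintype.card_fin, smul_eq_mul,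
    mul_comm]

variable {lam : ℕ → ℕ}

lemma overlapSign_walkMu (hlam : Antitone lam) {a b : ℕ} (ha : #s = a) (hb : #sᶜ = b) :
    overlapSign a b (walkMu lam b s) (walkMu lam a sᶜ) =
      (-1) ^ ∑ j : Fin #sᶜ, (a + (j + 1) - (sᶜ.orderEmbOfFin rfl j + 1)) := by
  subst ha hb
  have hN : #s + #sᶜ = N := by rw [card_add_card_compl, Fintype.card_fin]
  rw [overlapSign, card_filter_range_product]
  dsimp only
  congr 1
  refine sum_congr rfl fun j _ => ?_
  have hinv : #{i : Fin #s | walkMu lam #sᶜ s (i + 1) + #s - (i + 1) <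
      walkMu lam #s sᶜ (j + 1) + #sᶜ - (j + 1)} =
      #{i : Fin #s | sᶜ.orderEmbOfFin rfl j < s.orderEmbOfFin rfl i} := by
    refine congrArg card (filter_congr fun i _ => ?_)
    rw [hook_walkMu s hN i, hook_walkMu sᶜ (by omega) j]
    exact (hookAt_strictAnti hlam).lt_iff_gt
  have := card_filter_lt_orderEmbOfFin_add isCompl_compl j
  omega

end Sign

section Bijection

lemma Finset.exists_map_val_eq_of_le {α β : Type*} [Fintype α] {f : α → β}
    (hf : Function.Injective f) {S : Multiset β} (hS : S ≤ (univ : Finset α).val.map f) :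
    ∃ I : Finset α, I.val.map f = S := by
  refine ⟨univ.filter (fun a => f a ∈ S), (Multiset.Nodup.ext ((filter _ _).nodup.map hf)
    (Multiset.nodup_of_le hS (univ.nodup.map hf))).2 fun x => ?_⟩
  simp only [Multiset.mem_map, mem_val, mem_filter, mem_univ, true_and]
  refine ⟨fun ⟨a, ha, hax⟩ => hax ▸ ha, fun hx => ?_⟩
  obtain ⟨a, -, hax⟩ := Multiset.mem_map.1 (Multiset.mem_of_le hS hx)
  exact ⟨a, hax ▸ hx, hax⟩

variable {N a : ℕ} {lam : ℕ → ℕ}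

lemma eqParts_walkMu_of_map_hookAt_eq (hlam : Antitone lam) {s : Finset (Fin N)} {c : ℕ}
    (hc : #s = c) (ha : c + a = N) {mu : ℕ → ℕ} (hmu : Antitone mu) (hmuc : LenLE mu c)
    (h : s.val.map (hookAt N lam) = hooks c mu) : EqParts (walkMu lam a s) mu :=
  eqParts_of_hooks_eq (walkMu_antitone a s hlam) hmu (lenLE_walkMu a s hc) hmuc
    ((hooks_walkMu s hc ha).trans h)

lemma eq_of_eqParts_walkMu (hlam : Antitone lam) {s s' : Finset (Fin N)} (ha : #s + a = N)
    (hcard : #s = #s') (h : EqParts (walkMu lam a s) (walkMu lam a s')) : s = s' := by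
  have hhooks := hooks_congr (c := #s) h
  rw [hooks_walkMu s rfl ha, hooks_walkMu s' hcard.symm ha] at hhooks
  exact val_injective (Multiset.map_injective (hookAt_strictAnti hlam).injective hhooks)

variable {m n : ℕ}

lemma card_compl_of_card_eq {I : Finset (Fin (m + n))} (hI : #I = m) : #Iᶜ = n := by
  rw [card_compl, Fintype.card_fin, hI, Nat.add_sub_cancel_left]

lemma isOverlap_walkMu (hlen : LenLE lam (m + n))
    {I : Finset (Fin (m + n))} (hI : #I = m) :
    IsOverlap m n (walkMu lam n I) (walkMu lam m Iᶜ) lam := by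
  have hIc := card_compl_of_card_eq hI
  refine ⟨hlen, ?_⟩
  rw [hooks_eq_map_add_map_compl I, hooks_walkMu I hI rfl, hooks_walkMu Iᶜ hIc (add_comm n m)]

lemma exists_eqParts_walkMu (hlam : Antitone lam) {mu nu : ℕ → ℕ} (hmu : Antitone mu)
    (hmul : LenLE mu m) (hnu : Antitone nu) (hnul : LenLE nu n)
    (hov : IsOverlap m n mu nu lam) :
    ∃ I : Finset (Fin (m + n)), #I = m ∧
      EqParts (walkMu lam n I) mu ∧ EqParts (walkMu lam m Iᶜ) nu := by
  obtain ⟨I, hImu⟩ := exists_map_val_eq_of_le (hookAt_strictAnti hlam).injective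
    (S := hooks m mu) (by rw [← hooks_eq_map_hookAt, hov.2]; exact Multiset.le_add_right _ _)
  have hI : #I = m := by
    simpa only [Multiset.card_map, card_val, card_hooks] using congrArg Multiset.card hImu
  have hIc := card_compl_of_card_eq hI
  have hIcnu : Iᶜ.val.map (hookAt (m + n) lam) = hooks n nu := by
    have := hov.2
    rw [hooks_eq_map_add_map_compl I, hImu] at this
    exact add_left_cancel this
  refine ⟨I, hI, ?_, ?_⟩
  · exact eqParts_walkMu_of_map_hookAt_eq hlam hI rfl hmu hmul hImu
  · exact eqParts_walkMu_of_map_hookAt_eq hlam hIc (add_comm n m) hnu hnul hIcnu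

end Bijection

/-- **Labeled staircase walks parametrize pairs of overlapping partitions**
(Proposition 4.4): for a fixed partition `λ` of length at most `m+n`, the map
`V ↦ (μ, ν)` with `μ_i = λ_{V_i} + n + i − V_i` and `ν_j = λ_{H_j} + m + j − H_j`
is a bijection from `m`-element subsets of `{1,…,m+n}` onto pairs of partitions
with `μ ⋆_{m,n} ν = λ`, and the sign of the overlap is
`(−1)^{Σ_j (m+j−H_j)} = (−1)^{mn − Σ_i (n+i−V_i)}`. -/
theorem overlap_staircase_bijection
    {m n : ℕ} (lam : ℕ → ℕ) (hlam : IsPartition lam) (hlen : LenLE lam (m + n)) :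
    (∀ I : Finset (Fin (m + n)), I.card = m →
      IsPartition (walkMu lam n I) ∧ LenLE (walkMu lam n I) m ∧
      IsPartition (walkMu lam m Iᶜ) ∧ LenLE (walkMu lam m Iᶜ) n ∧
      IsOverlap m n (walkMu lam n I) (walkMu lam m Iᶜ) lam ∧
      overlapSign m n (walkMu lam n I) (walkMu lam m Iᶜ) =
        (-1) ^ (∑ j : Fin Iᶜ.card,
          (m + ((j : ℕ) + 1) - (((Iᶜ.orderIsoOfFin rfl j).1 : ℕ) + 1))) ∧
      overlapSign m n (walkMu lam n I) (walkMu lam m Iᶜ) =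
        (-1) ^ (m * n - ∑ i : Fin I.card,
          (n + ((i : ℕ) + 1) - (((I.orderIsoOfFin rfl i).1 : ℕ) + 1)))) ∧
    (∀ mu nu : ℕ → ℕ, IsPartition mu → LenLE mu m → IsPartition nu → LenLE nu n →
      IsOverlap m n mu nu lam →
      ∃! I : Finset (Fin (m + n)), I.card = m ∧
        EqParts (walkMu lam n I) mu ∧ EqParts (walkMu lam m Iᶜ) nu) := by
  have hanti := hlam.antitone
  refine ⟨fun I hI => ?_, fun mu nu hmu hmul hnu hnul hov => ?_⟩
  · have hIc := card_compl_of_card_eq hI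
    have hsign := overlapSign_walkMu hanti hI hIc
    have hsum := sum_add_sum_eq_mul isCompl_compl hI hIc
    simp only [coe_orderIsoOfFin_apply]
    refine ⟨isPartition_walkMu n I hanti, lenLE_walkMu n I hI, isPartition_walkMu m Iᶜ hanti,
      lenLE_walkMu m Iᶜ hIc, isOverlap_walkMu hlen hI, hsign, ?_⟩
    rw [hsign]
    congr 1
    omega
  · obtain ⟨I, hI, hImu, hInu⟩ := exists_eqParts_walkMu hanti hmu.antitone hmul hnu.antitone
      hnul hov
    refine ⟨I, ⟨hI, hImu, hInu⟩, fun I' ⟨hI', hI'mu, _⟩ => ?_⟩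
    exact (eq_of_eqParts_walkMu hanti (by omega) (hI'.trans hI.symm)
      fun i hi => (hI'mu i hi).trans (hImu i hi).symm)
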